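/- Let N and t be positive integers with t ≤ N, and let m ∈ ℝ^N have nonnegative entries arranged in nondecreasing order (m[1] ≤ m[2] ≤ ⋯ ≤ m[N]). Let t' = Σ_{n=1}^{N} m[n] and let N' be the number of indices n with m[n] > 0. Suppose t·m[n] ≤ t' for all n, and N' ≥ t+1. Then min(t'/t − m[N−t+1], m[N−N'+1]) > 0; that is, each iteration of the placement algorithm fills a strictly positive amount of storage. -/

import Mathlib

/-! Since `N' > t`, the entry `m[N-N'+1]` is the smallest positive one, and it lies strictly below
the block of the `t` largest entries `m[N-t+1], …, m[N]`. These `t` entries are each at least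
`m[N-t+1]`, so `t * m[N-t+1] ≤ t' - m[N-N'+1] < t'`. -/

open Finset

theorem Monotone.lt_apply_of_le_card_filter_lt {β : Type*} [LinearOrder β] {N : ℕ}
    {m : Fin N → β} (hmono : Monotone m) {c : β} {a : Fin N}
    (h : N - a ≤ #{n | c < m n}) : c < m a := by
  by_contra hle
  have hsub : ({n | c < m n} : Finset (Fin N)) ⊆ Ioi a := fun i hi => by
    rw [mem_filter] at hi
    rw [mem_Ioi]
    by_contra hia
    exact hle (hi.2.trans_le (hmono (not_lt.mp hia)))
  have hcard := h.trans (card_le_card hsub)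
  rw [Fin.card_Ioi] at hcard
  omega

theorem Monotone.sub_nsmul_le_sum_Ici {β : Type*} [AddCommMonoid β] [PartialOrder β]
    [IsOrderedAddMonoid β] {N : ℕ} {m : Fin N → β} (hmono : Monotone m) (b : Fin N) :
    (N - b) • m b ≤ ∑ i ∈ Ici b, m i := by
  simpa [Fin.card_Ici] using card_nsmul_le_sum (Ici b) m (m b) fun i hi => hmono (mem_Ici.mp hi)

theorem stmt_12 (N t : ℕ) (ht : 0 < t) (htN : t ≤ N)
    (m : Fin N → ℝ) (hm : ∀ n, 0 ≤ m n) (hmono : Monotone m)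
    (t' : ℝ) (ht' : t' = ∑ n, m n)
    (N' : ℕ) (hN' : N' = (Finset.univ.filter (fun n => 0 < m n)).card)
    (hN'big : t + 1 ≤ N') :
    0 < min (t' / t - m ⟨N - t, by omega⟩) (m ⟨N - N', by omega⟩) := by
  set a : Fin N := ⟨N - N', by omega⟩
  set b : Fin N := ⟨N - t, by omega⟩
  have hma : 0 < m a := hmono.lt_apply_of_le_card_filter_lt (by rw [← hN']; simp only [a]; omega)
  have htop : (t : ℝ) * m b ≤ ∑ i ∈ Ici b, m i := by
    have h := hmono.sub_nsmul_le_sum_Ici b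
    rwa [show N - (b : ℕ) = t by simp only [b]; omega, nsmul_eq_mul] at h
  have hab : a ∉ Ici b := by
    have hN'N : N' ≤ N := hN' ▸ (card_filter_le _ _).trans_eq (card_fin N)
    simp only [mem_Ici, Fin.le_def, a, b]
    omega
  have hsplit : m a + ∑ i ∈ Ici b, m i ≤ t' := by
    rw [ht', ← sum_insert hab]
    exact sum_le_univ_sum_of_nonneg hm
  refine lt_min ?_ hma
  rw [sub_pos, lt_div_iff₀ (by exact_mod_cast ht)]
  linarith
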